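/- Set a = n − m, and let s, t be integers with s < t = a (a vertex of type 2^a). Let M be the matrix with rows (1, i, 0), (0, 1, 0), (0, z, 1), where i ∈ 𝒪/𝒫^{-s} and z ∈ 𝒫/𝒫^{t-s}. Then M represents a γ-fixed point at the vertex (s,t) if and only if v(i) ≥ −s − m and v(z) ≥ t − s − n. -/

import Mathlib

noncomputable section

/-- The element π of F = K((π)). -/
def pp (K : Type*) [Field K] : LaurentSeries K := HahnSeries.single (1 : ℤ) (1 : K)

/-- The π-adic valuation on F = K((π)), with v(0) = ⊤. -/
def vv {K : Type*} [Field K] (x : LaurentSeries K) : WithTop ℤ := x.orderTop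

/-- x ∈ 𝒫^r, i.e. v(x) ≥ r. -/
def inP {K : Type*} [Field K] (r : ℤ) (x : LaurentSeries K) : Prop := (r : WithTop ℤ) ≤ vv x

/-- x ∈ 𝒫^r/𝒫^{r'} : x is a polynomial x_r π^r + ⋯ + x_{r'-1} π^{r'-1} (possibly 0). -/
def inPQ {K : Type*} [Field K] (r r' : ℤ) (x : LaurentSeries K) : Prop :=
  inP r x ∧ ∀ i : ℤ, r' ≤ i → x.coeff i = 0

/-- Membership in GL₃(𝒪): entries in 𝒪 and determinant a unit of 𝒪. -/
def inGLO {K : Type*} [Field K] (C : Matrix (Fin 3) (Fin 3) (LaurentSeries K)) : Prop :=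
  (∀ i j, inP 0 (C i j)) ∧ vv C.det = 0

/-- The matrix x_{(s,t)} = diag(1, π^s, π^t). -/
def xst (K : Type*) [Field K] (s t : ℤ) : Matrix (Fin 3) (Fin 3) (LaurentSeries K) :=
  Matrix.diagonal ![1, pp K ^ s, pp K ^ t]

/-- Membership in the subgroup I^a of GL₃(F). -/
def inIa {K : Type*} [Field K] (a : ℤ) (g : Matrix (Fin 3) (Fin 3) (LaurentSeries K)) : Prop :=
  g.det ≠ 0 ∧
  vv (g 0 0) = 0 ∧ vv (g 1 1) = 0 ∧ vv (g 2 2) = 0 ∧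
  inP (-a) (g 0 1) ∧ inP (-a) (g 0 2) ∧ inP 0 (g 1 2) ∧
  inP (a + 1) (g 1 0) ∧ inP (a + 1) (g 2 0) ∧ inP 1 (g 2 1)

/-- Membership in x_{(s,t)}·GL₃(𝒪)·x_{(s,t)}⁻¹. -/
def inConj {K : Type*} [Field K] (s t : ℤ) (g : Matrix (Fin 3) (Fin 3) (LaurentSeries K)) : Prop :=
  ∃ C, inGLO C ∧ g = xst K s t * C * (xst K s t)⁻¹

/-- M represents a γ-fixed point at the vertex (s,t): there is C ∈ GL₃(𝒪) with
γ·M·x_{(s,t)} = M·x_{(s,t)}·C. -/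
def reprFixed {K : Type*} [Field K] (γ M : Matrix (Fin 3) (Fin 3) (LaurentSeries K))
    (s t : ℤ) : Prop :=
  ∃ C, inGLO C ∧ γ * (M * xst K s t) = M * xst K s t * C

/-!
Since `M x_{(s,t)}` is invertible, the only candidate for `C` is
`(M x_{(s,t)})⁻¹ γ (M x_{(s,t)}) = !![u₁, i (u₁ - u₂) π^s, 0; 0, u₂, 0; 0, z (u₃ - u₂) π^(s-t), u₃]`.
Its determinant `u₁ u₂ u₃` is a unit, so `C ∈ GL₃(𝒪)` exactly when the two off-diagonal entries
are integral, and `v(u₁ - u₂) = m`, `v(u₃ - u₂) = n` turn this into the two valuation bounds.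
-/

section Valuation

variable {K : Type*} [Field K]

lemma vv_mul (x y : LaurentSeries K) : vv (x * y) = vv x + vv y :=
  HahnSeries.orderTop_mul x y

lemma pp_ne_zero : pp K ≠ 0 :=
  HahnSeries.single_ne_zero one_ne_zero

lemma vv_pp_zpow (s : ℤ) : vv (pp K ^ s) = s := by
  rw [pp, ← RatFunc.single_zpow, vv, HahnSeries.orderTop_single one_ne_zero]

lemma vv_sub_comm (x y : LaurentSeries K) : vv (x - y) = vv (y - x) := by
  rw [← neg_sub, vv, HahnSeries.orderTop_neg, vv]

lemma vv_sub_eq_vv_one_sub_div {u w : LaurentSeries K} (hw : vv w = 0) :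
    vv (w - u) = vv (1 - u / w) := by
  have hw0 : w ≠ 0 := by rintro rfl; simp [vv] at hw
  rw [← add_zero (vv (1 - u / w)), ← hw, ← vv_mul, sub_mul, div_mul_cancel₀ u hw0, one_mul]

lemma inP_mul_iff {x y : LaurentSeries K} {c e r : ℤ} (hy : vv y = c) (hr : e + c = r) :
    inP r (x * y) ↔ inP e x := by
  rw [inP, inP, vv_mul, hy, ← hr]
  cases vv x <;> simp [← WithTop.coe_add]

end Valuation

section Matrices

variable {n R : Type*} [Fintype n] [DecidableEq n] [CommRing R]

lemma exists_mul_eq_mul_iff_of_isUnit_det {γ A C₀ : Matrix n n R} (P : Matrix n n R → Prop)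
    (hA : IsUnit A.det) (hC₀ : γ * A = A * C₀) :
    (∃ C, P C ∧ γ * A = A * C) ↔ P C₀ := by
  refine ⟨fun ⟨C, hC, h⟩ => ?_, fun h => ⟨C₀, h, hC₀⟩⟩
  rwa [(Matrix.isUnit_iff_isUnit_det A).mpr hA |>.mul_left_cancel (hC₀.symm.trans h)]

end Matrices

section FixedPoint

variable {K : Type*} [Field K]

lemma inGLO_iff {u₁ u₂ u₃ : LaurentSeries K} (hu₁ : vv u₁ = 0) (hu₂ : vv u₂ = 0)
    (hu₃ : vv u₃ = 0) (b d : LaurentSeries K) :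
    inGLO !![u₁, b, 0; 0, u₂, 0; 0, d, u₃] ↔ inP 0 b ∧ inP 0 d := by
  have hdet : vv (!![u₁, b, 0; 0, u₂, 0; 0, d, u₃]).det = 0 := by
    simp [Matrix.det_fin_three, vv_mul, hu₁, hu₂, hu₃]
  have hv0 : vv (0 : LaurentSeries K) = ⊤ := HahnSeries.orderTop_zero
  simp [inGLO, hdet, Fin.forall_fin_succ, inP, hu₁, hu₂, hu₃, hv0]

lemma isUnit_det_mul_xst (i z : LaurentSeries K) (s t : ℤ) :
    IsUnit (!![1, i, 0; 0, 1, 0; 0, z, 1] * xst K s t).det := by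
  rw [Matrix.det_mul]
  simp [Matrix.det_fin_three, xst, Matrix.det_diagonal, Fin.prod_univ_three,
    zpow_ne_zero _ pp_ne_zero]

lemma diagonal_mul_mul_xst (u₁ u₂ u₃ i z : LaurentSeries K) (s t : ℤ) :
    Matrix.diagonal ![u₁, u₂, u₃] * (!![1, i, 0; 0, 1, 0; 0, z, 1] * xst K s t) =
      !![1, i, 0; 0, 1, 0; 0, z, 1] * xst K s t *
        !![u₁, i * ((u₁ - u₂) * pp K ^ s), 0; 0, u₂, 0;
          0, z * ((u₃ - u₂) * pp K ^ (s - t)), u₃] := by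
  have hpp : pp K ^ t * pp K ^ (s - t) = pp K ^ s := by
    rw [← zpow_add₀ pp_ne_zero, add_sub_cancel]
  simp only [xst, Matrix.diagonal_vec3, Matrix.mul_fin_three]
  refine Matrix.ext fun r c => ?_
  fin_cases r <;> fin_cases c <;>
    simp only [Fin.zero_eta, Fin.mk_one, Fin.reduceFinMk, Matrix.of_apply, Matrix.cons_val',
      Matrix.cons_val, Matrix.cons_val_zero, Matrix.cons_val_one, Matrix.cons_val_fin_one]
  all_goals first | ring1 | linear_combination (u₂ - u₃) * z * hpp

end FixedPoint

theorem stmt15_general (K : Type*) [Field K]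
    (u₁ u₂ u₃ : LaurentSeries K) (m n : ℤ)
    (hu₁ : vv u₁ = 0) (hu₂ : vv u₂ = 0) (hu₃ : vv u₃ = 0)
    (hv₁₂ : vv (1 - u₁ / u₂) = (m : WithTop ℤ))
    (hv₂₃ : vv (1 - u₂ / u₃) = (n : WithTop ℤ))
    (s t : ℤ)
    (i z : LaurentSeries K) :
    reprFixed (Matrix.diagonal ![u₁, u₂, u₃]) !![1, i, 0; 0, 1, 0; 0, z, 1] s t ↔
      (((-s - m : ℤ) : WithTop ℤ) ≤ vv i ∧ ((t - s - n : ℤ) : WithTop ℤ) ≤ vv z) := by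
  have h₁₂ : vv ((u₁ - u₂) * pp K ^ s) = (m + s : ℤ) := by
    rw [vv_mul, vv_sub_comm, vv_sub_eq_vv_one_sub_div hu₂, hv₁₂, vv_pp_zpow, WithTop.coe_add]
  have h₃₂ : vv ((u₃ - u₂) * pp K ^ (s - t)) = (n + (s - t) : ℤ) := by
    rw [vv_mul, vv_sub_eq_vv_one_sub_div hu₃, hv₂₃, vv_pp_zpow, WithTop.coe_add]
  rw [reprFixed, exists_mul_eq_mul_iff_of_isUnit_det inGLO (isUnit_det_mul_xst i z s t)
    (diagonal_mul_mul_xst u₁ u₂ u₃ i z s t), inGLO_iff hu₁ hu₂ hu₃]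
  exact and_congr (inP_mul_iff h₁₂ (by ring)) (inP_mul_iff h₃₂ (by ring))

theorem stmt15 (K : Type*) [Field K]
    (u₁ u₂ u₃ : LaurentSeries K) (m n : ℤ)
    (hu₁ : vv u₁ = 0) (hu₂ : vv u₂ = 0) (hu₃ : vv u₃ = 0)
    (h₁₂ : u₁ ≠ u₂) (h₁₃ : u₁ ≠ u₃) (h₂₃ : u₂ ≠ u₃)
    (hm : 0 ≤ m) (hmn : m ≤ n)
    (hv₁₂ : vv (1 - u₁ / u₂) = (m : WithTop ℤ))
    (hv₁₃ : vv (1 - u₁ / u₃) = (m : WithTop ℤ))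
    (hv₂₃ : vv (1 - u₂ / u₃) = (n : WithTop ℤ))
    (a s t : ℤ) (ha : a = n - m) (hst : s < t) (hta : t = a)
    (i z : LaurentSeries K) (hi : inPQ 0 (-s) i) (hz : inPQ 1 (t - s) z) :
    reprFixed (Matrix.diagonal ![u₁, u₂, u₃]) !![1, i, 0; 0, 1, 0; 0, z, 1] s t ↔
      (((-s - m : ℤ) : WithTop ℤ) ≤ vv i ∧ ((t - s - n : ℤ) : WithTop ℤ) ≤ vv z) :=
  stmt15_general K u₁ u₂ u₃ m n hu₁ hu₂ hu₃ hv₁₂ hv₂₃ s t i z
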